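/- Every smooth word u of height k can be extended on the right by a single letter to a smooth word of height k, or u is the last member of its maximal right smooth extension chain; moreover each smooth word of height k belongs to exactly one maximal right smooth extension chain of height k (the MRSE chains of height k form a partition of P^k(ε)). -/

import Mathlib

/-- Run lengths of a word: lengths of maximal blocks of equal letters. -/
def runLengths (w : List ℕ) : List ℕ :=
  (w.splitBy (· = ·)).map List.length

/-- The run-length derivative: run lengths, discarding the first and/or last
run if it has length one. -/
def wderiv (w : List ℕ) : List ℕ :=
  let r := runLengths w
  let r1 := if r.head? = some 1 then r.tail else r
  if r1.getLast? = some 1 then r1.dropLast else r1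

/-- `w` is a word over the alphabet {1,2}. -/
def IsWord (w : List ℕ) : Prop := ∀ a ∈ w, a = 1 ∨ a = 2

/-- `w` is differentiable: a word over {1,2} avoiding 111 and 222. -/
def Differentiable' (w : List ℕ) : Prop :=
  IsWord w ∧ ¬ ([1,1,1] <:+: w) ∧ ¬ ([2,2,2] <:+: w)

/-- `w` is smooth (C^∞): arbitrarily often differentiable. -/
def SmoothWord (w : List ℕ) : Prop := ∀ k : ℕ, Differentiable' (wderiv^[k] w)

/-- The height of a smooth word: least `k` with `D^k(w) = ε`. -/
noncomputable def height (w : List ℕ) : ℕ := sInf {k | wderiv^[k] w = []}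

/-- `P^k(ε)`: the set of smooth words of height `k`. -/
def Pk (k : ℕ) : Set (List ℕ) := {w | SmoothWord w ∧ height w = k}

/-- `v` is a primitive of `w`: a smooth word with `D(v) = w`. -/
def Primitive (v w : List ℕ) : Prop := SmoothWord v ∧ wderiv v = w

/-- Simple right extension: `w = uα` for a letter `α ∈ {1,2}`. -/
def SRE (u w : List ℕ) : Prop := ∃ α, (α = 1 ∨ α = 2) ∧ w = u ++ [α]

/-- Maximal right smooth extension (MRSE) chain of height `k`,
represented as the (nonempty) list of its members. -/
def MRSE (k : ℕ) (c : List (List ℕ)) : Prop :=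
  c ≠ [] ∧ (∀ u ∈ c, u ∈ Pk k) ∧ c.Chain' SRE ∧
  (∀ v ∈ Pk k, ∀ u₁, c.head? = some u₁ → ¬ SRE v u₁) ∧
  (∀ v ∈ Pk k, ∀ um, c.getLast? = some um → ¬ SRE um v)

/-- `H^k`: the set of MRSE chains of height `k`. -/
def Hset (k : ℕ) : Set (List (List ℕ)) := {c | MRSE k c}

/-- Letter complement: swaps 1 and 2. -/
def bar (a : ℕ) : ℕ := if a = 1 then 2 else 1

/-!
Inside `P^k(ε)` a word has at most one left neighbour for `≺` (drop its last letter), and also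
at most one right neighbour: if `u = v a` with `v ≠ ε` not ending in `a` (no `aaa` in `u a`) and
`T = D(u)`, then `D(u a) = T 2` and `D(u ā) = T 1`, so two right extensions of height `k` would
give two right extensions of `T` of height `k - 1`. Since every run has length at most two,
`|w| ≤ 2 |D w| + 4`, so words of height `k` are shorter than `4 · 2^k` and `≺`-chains in
`P^k(ε)` are finite. A relation that is injective in both directions and has only finite chains
partitions its domain into maximal chains.
-/

open List

section MaxChain

variable {α : Type*} (S : Set α) (R : α → α → Prop)

def IsMaxChainIn (c : List α) : Prop :=
  c ≠ [] ∧ (∀ u ∈ c, u ∈ S) ∧ c.IsChain R ∧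
  (∀ v ∈ S, ∀ u₁, c.head? = some u₁ → ¬ R v u₁) ∧
  (∀ v ∈ S, ∀ um, c.getLast? = some um → ¬ R um v)

def IsRightMaxChainIn (c : List α) : Prop :=
  (∀ u ∈ c, u ∈ S) ∧ c.IsChain R ∧ ∀ v ∈ S, ∀ um, c.getLast? = some um → ¬ R um v

variable {S R}

theorem isRightMaxChainIn_singleton {x : α} :
    IsRightMaxChainIn S R [x] ↔ x ∈ S ∧ ∀ v ∈ S, ¬ R x v := by
  simp [IsRightMaxChainIn]

theorem isRightMaxChainIn_cons_cons {x y : α} {t : List α} :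
    IsRightMaxChainIn S R (x :: y :: t) ↔ x ∈ S ∧ R x y ∧ IsRightMaxChainIn S R (y :: t) := by
  simp only [IsRightMaxChainIn, forall_mem_cons, isChain_cons_cons, getLast?_cons_cons]
  tauto

theorem isMaxChainIn_reverse_append_cons_iff {s t : List α} {u : α} :
    IsMaxChainIn S R (s.reverse ++ u :: t) ↔
      IsRightMaxChainIn S (flip R) (u :: s) ∧ IsRightMaxChainIn S R (u :: t) := by
  have hhead : (s.reverse ++ u :: t).head? = (u :: s).getLast? := by
    rw [show s.reverse ++ u :: t = (u :: s).reverse ++ t by simp,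
      head?_append_of_ne_nil _ (by simp), head?_reverse]
  have hlast : (s.reverse ++ u :: t).getLast? = (u :: t).getLast? :=
    getLast?_append_of_ne_nil _ (cons_ne_nil u t)
  have hchain :
      (s.reverse ++ u :: t).IsChain R ↔ (u :: s).IsChain (flip R) ∧ (u :: t).IsChain R := by
    rw [isChain_split, ← reverse_cons, isChain_reverse]; rfl
  simp only [IsMaxChainIn, IsRightMaxChainIn, hhead, hlast, hchain, mem_append, mem_reverse,
    mem_cons, or_imp, forall_and, forall_eq, flip, ne_eq, append_eq_nil_iff, reduceCtorEq,
    and_false, not_false_eq_true, true_and]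
  tauto

theorem exists_isRightMaxChainIn_cons (f : α → ℕ) (N : ℕ)
    (hf : ∀ x ∈ S, ∀ y ∈ S, R x y → f x < f y) (hN : ∀ x ∈ S, f x ≤ N) {x : α} (hx : x ∈ S) :
    ∃ t, IsRightMaxChainIn S R (x :: t) := by
  induction hn : N - f x using Nat.strong_induction_on generalizing x with
  | _ n ih =>
  by_cases hsucc : ∃ y ∈ S, R x y
  · obtain ⟨y, hy, hxy⟩ := hsucc
    obtain ⟨t, ht⟩ := ih (N - f y) (by have := hf x hx y hy hxy; have := hN y hy; omega) hy rfl
    exact ⟨y :: t, isRightMaxChainIn_cons_cons.2 ⟨hx, hxy, ht⟩⟩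
  · push Not at hsucc
    exact ⟨[], isRightMaxChainIn_singleton.2 ⟨hx, hsucc⟩⟩

theorem IsRightMaxChainIn.unique (hsucc : ∀ x ∈ S, ∀ y ∈ S, ∀ z ∈ S, R x y → R x z → y = z)
    {x : α} {t₁ t₂ : List α} (h₁ : IsRightMaxChainIn S R (x :: t₁))
    (h₂ : IsRightMaxChainIn S R (x :: t₂)) : t₁ = t₂ := by
  induction t₁ generalizing x t₂ with
  | nil =>
    cases t₂ with
    | nil => rfl
    | cons y t₂ =>
      obtain ⟨-, hxy, hy⟩ := isRightMaxChainIn_cons_cons.1 h₂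
      exact absurd hxy ((isRightMaxChainIn_singleton.1 h₁).2 y (hy.1 y mem_cons_self))
  | cons y₁ t₁ ih =>
    obtain ⟨hx, hxy₁, h₁⟩ := isRightMaxChainIn_cons_cons.1 h₁
    cases t₂ with
    | nil => exact absurd hxy₁ ((isRightMaxChainIn_singleton.1 h₂).2 y₁ (h₁.1 y₁ mem_cons_self))
    | cons y₂ t₂ =>
      obtain ⟨-, hxy₂, h₂⟩ := isRightMaxChainIn_cons_cons.1 h₂
      obtain rfl := hsucc x hx y₁ (h₁.1 y₁ mem_cons_self) y₂ (h₂.1 y₂ mem_cons_self) hxy₁ hxy₂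
      rw [ih h₁ h₂]

theorem existsUnique_isMaxChainIn (f : α → ℕ) (N : ℕ)
    (hf : ∀ x ∈ S, ∀ y ∈ S, R x y → f x < f y) (hN : ∀ x ∈ S, f x ≤ N)
    (hsucc : ∀ x ∈ S, ∀ y ∈ S, ∀ z ∈ S, R x y → R x z → y = z)
    (hpred : ∀ x ∈ S, ∀ y ∈ S, ∀ z ∈ S, R y x → R z x → y = z) {u : α} (hu : u ∈ S) :
    ∃! c, IsMaxChainIn S R c ∧ u ∈ c := by
  obtain ⟨s, hs⟩ := exists_isRightMaxChainIn_cons (R := flip R) (fun x => N - f x) N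
    (fun x hx y hy hxy => by have := hf y hy x hx hxy; have := hN x hx; omega)
    (fun _ _ => Nat.sub_le _ _) hu
  obtain ⟨t, ht⟩ := exists_isRightMaxChainIn_cons f N hf hN hu
  refine ⟨s.reverse ++ u :: t, ⟨isMaxChainIn_reverse_append_cons_iff.2 ⟨hs, ht⟩, by simp⟩, ?_⟩
  rintro c ⟨hc, huc⟩
  obtain ⟨s', t', rfl⟩ := append_of_mem huc
  rw [← reverse_reverse s'] at hc ⊢
  obtain ⟨hs', ht'⟩ := isMaxChainIn_reverse_append_cons_iff.1 hc
  rw [hs'.unique hpred hs, ht'.unique hsucc ht]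

theorem IsMaxChainIn.getLast?_eq_of_forall_not_rel {c : List α} {u : α}
    (hc : IsMaxChainIn S R c) (hu : u ∈ c) (h : ∀ v ∈ S, ¬ R u v) : c.getLast? = some u := by
  obtain ⟨s, t, rfl⟩ := append_of_mem hu
  rw [← reverse_reverse s] at hc ⊢
  obtain ⟨-, ht⟩ := isMaxChainIn_reverse_append_cons_iff.1 hc
  cases t with
  | nil => simp
  | cons v t =>
    obtain ⟨-, huv, hv⟩ := isRightMaxChainIn_cons_cons.1 ht
    exact absurd huv (h v (hv.1 v mem_cons_self))

end MaxChain

section RunLengths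

theorem runLengths_append {v m : List ℕ} (h : ∀ x ∈ v.getLast?, ∀ y ∈ m.head?, x ≠ y) :
    runLengths (v ++ m) = runLengths v ++ runLengths m := by
  rw [runLengths, splitBy_append (by simpa using h), map_append]
  rfl

theorem runLengths_replicate {n : ℕ} (hn : n ≠ 0) (a : ℕ) : runLengths (replicate n a) = [n] := by
  rw [runLengths, splitBy_of_isChain (by simpa using hn) (isChain_replicate_of_rel n (by simp))]
  simp

theorem runLengths_eq_nil {w : List ℕ} : runLengths w = [] ↔ w = [] := by
  simp [runLengths, splitBy_eq_nil]

theorem sum_runLengths (w : List ℕ) : (runLengths w).sum = w.length := by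
  rw [runLengths, ← length_flatten, flatten_splitBy]

theorem pos_of_mem_runLengths {w : List ℕ} {n : ℕ} (h : n ∈ runLengths w) : 0 < n := by
  obtain ⟨m, hm, rfl⟩ := mem_map.1 h
  exact length_pos_iff.2 (ne_nil_of_mem_splitBy hm)

theorem le_two_of_mem_runLengths {w : List ℕ} (hw : Differentiable' w) {n : ℕ}
    (h : n ∈ runLengths w) : n ≤ 2 := by
  obtain ⟨m, hm, rfl⟩ := mem_map.1 h
  by_contra! hlong
  obtain ⟨a, b, c, m', rfl⟩ : ∃ a b c m', m = a :: b :: c :: m' := by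
    match m, hlong with
    | a :: b :: c :: m', _ => exact ⟨a, b, c, m', rfl⟩
  obtain ⟨rfl, rfl, -⟩ : a = b ∧ b = c ∧ _ := by
    simpa using isChain_of_mem_splitBy hm
  have hinf : [a, a, a] <:+: w :=
    (prefix_append [a, a, a] m').isInfix.trans (flatten_splitBy _ w ▸ infix_of_mem_flatten hm)
  rcases hw.1 a (hinf.subset (by simp)) with rfl | rfl
  exacts [hw.2.1 hinf, hw.2.2 hinf]

theorem runLengths_singleton (a : ℕ) : runLengths [a] = [1] :=
  runLengths_replicate one_ne_zero a

theorem runLengths_pair_self (a : ℕ) : runLengths [a, a] = [2] :=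
  runLengths_replicate two_ne_zero a

theorem runLengths_pair_of_ne {a b : ℕ} (hab : a ≠ b) : runLengths [a, b] = [1, 1] :=
  runLengths_append (v := [a]) (m := [b]) (by simpa using hab)

end RunLengths

section Derivative

def dropHeadIfOne (r : List ℕ) : List ℕ := if r.head? = some 1 then r.tail else r

def dropLastIfOne (r : List ℕ) : List ℕ := if r.getLast? = some 1 then r.dropLast else r

theorem wderiv_eq (w : List ℕ) : wderiv w = dropLastIfOne (dropHeadIfOne (runLengths w)) := rfl

theorem dropHeadIfOne_append {r : List ℕ} (hr : r ≠ []) (s : List ℕ) :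
    dropHeadIfOne (r ++ s) = dropHeadIfOne r ++ s := by
  unfold dropHeadIfOne
  rw [head?_append_of_ne_nil r hr]
  split
  · exact tail_append_of_ne_nil hr
  · rfl

@[simp] theorem dropLastIfOne_append_one (r : List ℕ) : dropLastIfOne (r ++ [1]) = r := by
  simp [dropLastIfOne]

@[simp] theorem dropLastIfOne_append_two (r : List ℕ) : dropLastIfOne (r ++ [2]) = r ++ [2] := by
  simp [dropLastIfOne]

theorem length_le_length_dropHeadIfOne_add_one (r : List ℕ) :
    r.length ≤ (dropHeadIfOne r).length + 1 := by
  unfold dropHeadIfOne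
  split
  · rw [length_tail]; omega
  · omega

theorem length_le_length_dropLastIfOne_add_one (r : List ℕ) :
    r.length ≤ (dropLastIfOne r).length + 1 := by
  unfold dropLastIfOne
  split
  · rw [length_dropLast]; omega
  · omega

theorem length_dropLastIfOne_le (r : List ℕ) : (dropLastIfOne r).length ≤ r.length := by
  unfold dropLastIfOne; split <;> simp

theorem length_dropHeadIfOne_runLengths_lt {w : List ℕ} (hw : w ≠ []) :
    (dropHeadIfOne (runLengths w)).length < w.length := by
  obtain ⟨x, t, hxt⟩ := exists_cons_of_ne_nil (mt runLengths_eq_nil.1 hw)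
  have hx : 0 < x := pos_of_mem_runLengths (hxt ▸ mem_cons_self)
  have ht : t.length ≤ t.sum := length_le_sum_of_one_le t fun y hy =>
    pos_of_mem_runLengths (hxt ▸ mem_cons_of_mem x hy)
  have hsum := sum_runLengths w
  rw [hxt, sum_cons] at hsum
  rw [hxt, dropHeadIfOne]
  split
  · simp only [tail_cons]; omega
  · have : x ≠ 1 := by rintro rfl; simp_all
    simp only [length_cons]; omega

theorem length_wderiv_lt {w : List ℕ} (hw : w ≠ []) : (wderiv w).length < w.length :=
  (length_dropLastIfOne_le _).trans_lt (length_dropHeadIfOne_runLengths_lt hw)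

theorem length_le_two_mul_length_wderiv_add_four {w : List ℕ} (hw : Differentiable' w) :
    w.length ≤ 2 * (wderiv w).length + 4 := by
  have hsum : (runLengths w).sum ≤ (runLengths w).length • 2 :=
    sum_le_card_nsmul _ 2 fun _ => le_two_of_mem_runLengths hw
  have h₁ := length_le_length_dropHeadIfOne_add_one (runLengths w)
  have h₂ := length_le_length_dropLastIfOne_add_one (dropHeadIfOne (runLengths w))
  rw [sum_runLengths, smul_eq_mul] at hsum
  rw [wderiv_eq]
  omega

theorem wderiv_append_of_getLast?_ne {v m : List ℕ} (hv : v ≠ [])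
    (h : ∀ x ∈ v.getLast?, ∀ y ∈ m.head?, x ≠ y) :
    wderiv (v ++ m) = dropLastIfOne (dropHeadIfOne (runLengths v) ++ runLengths m) := by
  rw [wderiv_eq, runLengths_append h, dropHeadIfOne_append (mt runLengths_eq_nil.1 hv)]

theorem wderiv_singleton (a : ℕ) : wderiv [a] = [] := by
  rw [wderiv_eq, runLengths_singleton]
  rfl

theorem wderiv_pair_self (a : ℕ) : wderiv [a, a] = [2] := by
  rw [wderiv_eq, runLengths_pair_self]
  rfl

section

variable {v : List ℕ} {a : ℕ} (hv : v ≠ []) (hva : ∀ x ∈ v.getLast?, x ≠ a)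
include hv hva

theorem wderiv_append_singleton : wderiv (v ++ [a]) = dropHeadIfOne (runLengths v) := by
  rw [wderiv_append_of_getLast?_ne hv (by simpa using hva), runLengths_singleton,
    dropLastIfOne_append_one]

theorem wderiv_append_pair_self : wderiv (v ++ [a, a]) = dropHeadIfOne (runLengths v) ++ [2] := by
  rw [wderiv_append_of_getLast?_ne hv (by simpa using hva), runLengths_pair_self,
    dropLastIfOne_append_two]

theorem wderiv_append_pair_of_ne {b : ℕ} (hab : a ≠ b) :
    wderiv (v ++ [a, b]) = dropHeadIfOne (runLengths v) ++ [1] := by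
  rw [wderiv_append_of_getLast?_ne hv (by simpa using hva), runLengths_pair_of_ne hab,
    ← singleton_append, ← append_assoc, dropLastIfOne_append_one]

end

end Derivative

section Height

theorem exists_iterate_wderiv_eq_nil (w : List ℕ) : ∃ k, wderiv^[k] w = [] := by
  induction hn : w.length using Nat.strong_induction_on generalizing w with
  | _ n ih =>
  rcases eq_or_ne w [] with rfl | hw
  · exact ⟨0, rfl⟩
  · obtain ⟨k, hk⟩ := ih _ (hn ▸ length_wderiv_lt hw) (wderiv w) rfl
    exact ⟨k + 1, hk⟩

theorem iterate_height (w : List ℕ) : wderiv^[height w] w = [] :=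
  Nat.sInf_mem (exists_iterate_wderiv_eq_nil w)

@[simp] theorem height_nil : height [] = 0 :=
  Nat.eq_zero_of_le_zero (Nat.sInf_le rfl)

theorem height_eq_zero_iff {w : List ℕ} : height w = 0 ↔ w = [] := by
  refine ⟨fun h => ?_, fun h => h ▸ height_nil⟩
  simpa [h] using iterate_height w

theorem height_eq_height_wderiv_add_one {w : List ℕ} (hw : w ≠ []) :
    height w = height (wderiv w) + 1 := by
  obtain ⟨m, hm⟩ := Nat.exists_eq_succ_of_ne_zero (mt height_eq_zero_iff.1 hw)
  have hle : height w ≤ height (wderiv w) + 1 := Nat.sInf_le (iterate_height (wderiv w))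
  have hge : height (wderiv w) ≤ m := Nat.sInf_le (hm ▸ iterate_height w :)
  omega

end Height

section SmoothWords

theorem SmoothWord.differentiable {w : List ℕ} (hw : SmoothWord w) : Differentiable' w := hw 0

theorem SmoothWord.wderiv {w : List ℕ} (hw : SmoothWord w) : SmoothWord (wderiv w) :=
  fun k => hw (k + 1)

theorem eq_nil_of_mem_Pk_zero {u : List ℕ} (hu : u ∈ Pk 0) : u = [] :=
  height_eq_zero_iff.1 hu.2

theorem ne_nil_of_mem_Pk_succ {k : ℕ} {u : List ℕ} (hu : u ∈ Pk (k + 1)) : u ≠ [] := by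
  rintro rfl
  simpa using hu.2

theorem wderiv_mem_Pk {k : ℕ} {u : List ℕ} (hu : u ∈ Pk (k + 1)) : wderiv u ∈ Pk k :=
  ⟨hu.1.wderiv, by
    have := height_eq_height_wderiv_add_one (ne_nil_of_mem_Pk_succ hu)
    rw [hu.2] at this
    omega⟩

theorem length_add_four_le_of_mem_Pk {k : ℕ} {u : List ℕ} (hu : u ∈ Pk k) :
    u.length + 4 ≤ 4 * 2 ^ k := by
  induction k generalizing u with
  | zero => simp [eq_nil_of_mem_Pk_zero hu]
  | succ k ih =>
    have := ih (wderiv_mem_Pk hu)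
    have := length_le_two_mul_length_wderiv_add_four hu.1.differentiable
    rw [pow_succ]
    omega

end SmoothWords

section RightExtensions

theorem append_two_not_mem_Pk_of_append_one_mem_Pk {k : ℕ} {u : List ℕ} (hu : u ∈ Pk k)
    (h₁ : u ++ [1] ∈ Pk k) : u ++ [2] ∉ Pk k := by
  induction k generalizing u with
  | zero => exact absurd (eq_nil_of_mem_Pk_zero h₁) (by simp)
  | succ k ih =>
    intro h₂
    have hne := ne_nil_of_mem_Pk_succ hu
    obtain ⟨v, a, rfl⟩ : ∃ v a, u = v ++ [a] :=
      ⟨u.dropLast, u.getLast hne, (dropLast_append_getLast hne).symm⟩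
    have ha : a = 1 ∨ a = 2 := hu.1.differentiable.1 a (by simp)
    have haa : v ++ [a, a] ∈ Pk (k + 1) := by
      rcases ha with rfl | rfl
      exacts [by simpa using h₁, by simpa using h₂]
    have hva : ∀ x ∈ v.getLast?, x ≠ a := by
      rintro x hx rfl
      obtain ⟨v', rfl⟩ := getLast?_eq_some_iff.1 hx
      have hinf : [x, x, x] <:+: v' ++ [x] ++ [x, x] := ⟨v', [], by simp⟩
      rcases ha with rfl | rfl
      exacts [haa.1.differentiable.2.1 hinf, haa.1.differentiable.2.2 hinf]
    rcases eq_or_ne v [] with rfl | hv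
    · have hk : k = 0 := by simpa [wderiv_singleton] using (wderiv_mem_Pk hu).2.symm
      subst hk
      simpa [wderiv_pair_self] using eq_nil_of_mem_Pk_zero (wderiv_mem_Pk haa)
    · have hT := wderiv_append_singleton hv hva ▸ wderiv_mem_Pk hu
      rcases ha with rfl | rfl
      · exact ih hT
          (wderiv_append_pair_of_ne hv hva (b := 2) (by decide) ▸ wderiv_mem_Pk (by simpa using h₂))
          (wderiv_append_pair_self hv hva ▸ wderiv_mem_Pk (by simpa using h₁))
      · exact ih hT
          (wderiv_append_pair_of_ne hv hva (b := 1) (by decide) ▸ wderiv_mem_Pk (by simpa using h₁))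
          (wderiv_append_pair_self hv hva ▸ wderiv_mem_Pk (by simpa using h₂))

theorem SRE.length_eq {u v : List ℕ} (h : SRE u v) : v.length = u.length + 1 := by
  obtain ⟨α, -, rfl⟩ := h
  simp

theorem SRE.left_unique {u v w : List ℕ} (hu : SRE u w) (hv : SRE v w) : u = v := by
  obtain ⟨α, -, rfl⟩ := hu
  obtain ⟨β, -, h⟩ := hv
  exact append_inj_left' h rfl

theorem SRE.right_unique_of_mem_Pk {k : ℕ} {u v w : List ℕ} (hu : u ∈ Pk k) (hv : v ∈ Pk k)
    (hw : w ∈ Pk k) (huv : SRE u v) (huw : SRE u w) : v = w := by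
  obtain ⟨α, hα, rfl⟩ := huv
  obtain ⟨β, hβ, rfl⟩ := huw
  rcases hα with rfl | rfl <;> rcases hβ with rfl | rfl
  · rfl
  · exact absurd hw (append_two_not_mem_Pk_of_append_one_mem_Pk hu hv)
  · exact absurd hv (append_two_not_mem_Pk_of_append_one_mem_Pk hu hw)
  · rfl

end RightExtensions

theorem mem_Hset_iff {k : ℕ} {c : List (List ℕ)} : c ∈ Hset k ↔ IsMaxChainIn (Pk k) SRE c :=
  Iff.rfl

theorem stmt7_general (k : ℕ) :
    (∀ u ∈ Pk k, (∃ α, (α = 1 ∨ α = 2) ∧ u ++ [α] ∈ Pk k) ∨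
      (∀ c ∈ Hset k, u ∈ c → c.getLast? = some u)) ∧
    (∀ u ∈ Pk k, ∃! c, c ∈ Hset k ∧ u ∈ c) := by
  refine ⟨fun u _ => ?_, fun u hu => ?_⟩
  · by_cases hext : ∃ α, (α = 1 ∨ α = 2) ∧ u ++ [α] ∈ Pk k
    · exact Or.inl hext
    · refine Or.inr fun c hc huc => (mem_Hset_iff.1 hc).getLast?_eq_of_forall_not_rel huc ?_
      rintro v hv ⟨α, hα, rfl⟩
      exact hext ⟨α, hα, hv⟩
  · exact existsUnique_isMaxChainIn (S := Pk k) (R := SRE) length (4 * 2 ^ k)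
      (fun _ _ _ _ hxy => by rw [hxy.length_eq]; omega)
      (fun _ hx => by have := length_add_four_le_of_mem_Pk hx; omega)
      (fun _ hx _ hy _ hz => SRE.right_unique_of_mem_Pk hx hy hz)
      (fun _ _ _ _ _ _ => SRE.left_unique) hu

/-- Every smooth word of height `k` either extends on the right by a letter within
`P^k(ε)` or is the last member of its MRSE chain; and each smooth word of height `k`
belongs to exactly one MRSE chain of height `k`. -/
theorem stmt7 (k : ℕ) (hk : 1 ≤ k) :
    (∀ u ∈ Pk k, (∃ α, (α = 1 ∨ α = 2) ∧ u ++ [α] ∈ Pk k) ∨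
      (∀ c ∈ Hset k, u ∈ c → c.getLast? = some u)) ∧
    (∀ u ∈ Pk k, ∃! c, c ∈ Hset k ∧ u ∈ c) :=
  stmt7_general k
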